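/- arXiv:1201.2292 — 4 statements merged into one kernel-verified Lean document; each statement's English description precedes it below -/
import Mathlib

section
/- Let g:(0,∞)→(0,∞) be strictly decreasing, and suppose that for every a>0 there exists b_a>0 such that g(a x) = b_a · g(x) for all x>0. Then there exist w>0 and α>0 such that g(x) = w·x^{-α} for all x>0. -/
/-!
In logarithmic coordinates, `t ↦ log g(1) - log g(eᵗ)` is additive by the scaling equation and
monotone because `g` decreases. A monotone additive function on `ℝ` is linear: it is linear on `ℚ`,
and monotonicity squeezes it between its values at rationals approaching any real point. Its
slope `α = log g(1) - log g(e)` is positive since `g` is strictly decreasing.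
-/

open Real Set Filter Topology

theorem AddMonoidHom.apply_eq_mul_of_monotone (f : ℝ →+ ℝ) (hf : Monotone f) (x : ℝ) :
    f x = x * f 1 := by
  have hrat (q : ℚ) : f q = q * f 1 := by simpa using map_ratCast_smul f ℝ ℝ q 1
  have hlim (u : ℕ → ℚ) (hu : Tendsto (u · : ℕ → ℝ) atTop (𝓝 x)) :
      Tendsto (fun n ↦ f (u n)) atTop (𝓝 (x * f 1)) := by
    simpa only [hrat] using hu.mul_const (f 1)
  obtain ⟨u, -, hux, hu⟩ := Real.exists_seq_rat_strictMono_tendsto x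
  obtain ⟨v, -, hvx, hv⟩ := Real.exists_seq_rat_strictAnti_tendsto x
  exact le_antisymm (ge_of_tendsto' (hlim v hv) fun n ↦ hf (hvx n).le)
    (le_of_tendsto' (hlim u hu) fun n ↦ hf (hux n).le)

theorem map_mul_mul_map_one_of_scaling {g : ℝ → ℝ}
    (hscale : ∀ a : ℝ, 0 < a → ∃ b : ℝ, ∀ x : ℝ, 0 < x → g (a * x) = b * g x)
    {a x : ℝ} (ha : 0 < a) (hx : 0 < x) : g (a * x) * g 1 = g a * g x := by
  obtain ⟨b, hb⟩ := hscale a ha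
  have hb1 : g a = b * g 1 := by simpa using hb 1 one_pos
  rw [hb x hx, hb1]
  ring

theorem eq_mul_rpow_of_map_mul_of_antitoneOn {g : ℝ → ℝ} (hpos : ∀ x : ℝ, 0 < x → 0 < g x)
    (hmul : ∀ a x : ℝ, 0 < a → 0 < x → g (a * x) * g 1 = g a * g x)
    (hanti : AntitoneOn g (Ioi 0)) {x : ℝ} (hx : 0 < x) :
    g x = g 1 * x ^ (-(log (g 1) - log (g (exp 1)))) := by
  have hlog (s t : ℝ) : log (g (exp (s + t))) + log (g 1) = log (g (exp s)) + log (g (exp t)) := by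
    rw [← log_mul (hpos _ (exp_pos _)).ne' (hpos _ one_pos).ne',
      ← log_mul (hpos _ (exp_pos _)).ne' (hpos _ (exp_pos _)).ne', exp_add,
      hmul _ _ (exp_pos s) (exp_pos t)]
  let F : ℝ →+ ℝ := AddMonoidHom.mk' (fun t ↦ log (g 1) - log (g (exp t)))
    fun s t ↦ by linarith [hlog s t]
  have hF : Monotone F := fun s t hst ↦ sub_le_sub_left
    (log_le_log (hpos _ (exp_pos t)) (hanti (exp_pos s) (exp_pos t) (exp_le_exp.2 hst))) _
  have hlin := F.apply_eq_mul_of_monotone hF (log x)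
  simp only [F, AddMonoidHom.mk'_apply, exp_log hx] at hlin
  rw [rpow_def_of_pos hx, ← exp_log (hpos x hx),
    show log (g x) = log (g 1) + log x * -(log (g 1) - log (g (exp 1))) by linarith,
    exp_add, exp_log (hpos 1 one_pos)]

/-- a strictly decreasing positive function on `(0,∞)` satisfying the
multiplicative scaling equation `g(ax) = bₐ·g(x)` must be a power function `g(x) = w·x^{-α}`
with `w > 0` and `α > 0`. -/
theorem stmt5 (g : ℝ → ℝ)
    (hdec : StrictAntiOn g (Set.Ioi 0))
    (hpos : ∀ x : ℝ, 0 < x → 0 < g x)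
    (hscale : ∀ a : ℝ, 0 < a → ∃ b : ℝ, 0 < b ∧ ∀ x : ℝ, 0 < x → g (a * x) = b * g x) :
    ∃ w α : ℝ, 0 < w ∧ 0 < α ∧ ∀ x : ℝ, 0 < x → g x = w * x ^ (-α) := by
  have hmul (a x : ℝ) (ha : 0 < a) (hx : 0 < x) : g (a * x) * g 1 = g a * g x :=
    map_mul_mul_map_one_of_scaling (fun a ha ↦ (hscale a ha).imp fun _ ↦ And.right) ha hx
  have hα : log (g (exp 1)) < log (g 1) :=
    log_lt_log (hpos _ (exp_pos 1))
      (hdec (mem_Ioi.2 one_pos) (mem_Ioi.2 (exp_pos 1)) (one_lt_exp_iff.2 one_pos))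
  exact ⟨g 1, log (g 1) - log (g (exp 1)), hpos 1 one_pos, sub_pos.2 hα,
    fun x hx ↦ eq_mul_rpow_of_map_mul_of_antitoneOn hpos hmul hdec.antitoneOn hx⟩
end

section
/- Let U:(0,∞)→ℝ be strictly increasing, differentiable and strictly concave, and suppose that for every a>0 there exist b_a>0 and d_a∈ℝ such that U(a x) = b_a·U(x) + d_a for all x>0. Then there exist α>0, w>0 and c∈ℝ such that either α≠1 and U(x) = w·x^{1-α}/(1-α) + c for all x>0, or α=1 and U(x) = w·log x + c for all x>0. -/
/-!
Differentiating `U (a x) = b U x + d` gives `a U'(a x) = b U'(x)`, so `x ↦ U'(x) / U'(1)` is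
multiplicative on `(0, ∞)`; it is positive and decreasing because `U` is increasing and strictly
concave. Conjugated by `exp` and `log` it becomes an antitone, hence measurable, additive map
`ℝ → ℝ`, which is linear. Thus `U'(x) = U'(1) x^(-α)` with `α > 0`, and integrating gives the
two iso-elastic forms.
-/

open Set Real

theorem AddMonoidHom.apply_eq_mul_apply_one_of_measurable (f : ℝ →+ ℝ) (hf : Measurable f)
    (t : ℝ) : f t = t * f 1 := by
  simpa using
    map_real_smul f (MeasureTheory.Measure.AddMonoidHom.continuous_of_measurable f hf) t 1

theorem exists_rpow_of_map_mul_of_antitoneOn {h : ℝ → ℝ} (hpos : ∀ x, 0 < x → 0 < h x)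
    (hmul : ∀ x y, 0 < x → 0 < y → h (x * y) = h x * h y) (hanti : AntitoneOn h (Ioi 0)) :
    ∃ s : ℝ, ∀ x, 0 < x → h x = x ^ s := by
  let G : ℝ →+ ℝ := AddMonoidHom.mk' (fun t => log (h (exp t))) fun t u => by
    rw [exp_add, hmul _ _ (exp_pos t) (exp_pos u),
      log_mul (hpos _ (exp_pos t)).ne' (hpos _ (exp_pos u)).ne']
  have hG : Antitone G := fun t u htu =>
    log_le_log (hpos _ (exp_pos u)) (hanti (exp_pos t) (exp_pos u) (exp_le_exp.2 htu))
  refine ⟨G 1, fun x hx => ?_⟩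
  rw [rpow_def_of_pos hx, ← G.apply_eq_mul_apply_one_of_measurable hG.measurable]
  simp [G, exp_log hx, exp_log (hpos x hx)]

theorem StrictConcaveOn.deriv_pos_of_monotoneOn {S : Set ℝ} {f : ℝ → ℝ} {x y : ℝ}
    (hfc : StrictConcaveOn ℝ S f) (hf : MonotoneOn f S) (hx : x ∈ S) (hy : y ∈ S) (hxy : x < y)
    (hfd : DifferentiableAt ℝ f x) : 0 < deriv f x :=
  (hf.slope_nonneg hx hy).trans_lt (hfc.slope_lt_deriv hx hy hxy hfd)

theorem deriv_comp_mul_of_affine_scaling {U : ℝ → ℝ} (hdiff : DifferentiableOn ℝ U (Ioi 0))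
    {a b d : ℝ} (ha : 0 < a) (hU : ∀ x, 0 < x → U (a * x) = b * U x + d) {x : ℝ} (hx : 0 < x) :
    deriv U (a * x) * a = b * deriv U x := by
  have hdAt : ∀ y, 0 < y → DifferentiableAt ℝ U y := fun y hy =>
    hdiff.differentiableAt (isOpen_Ioi.mem_nhds hy)
  have hlhs : HasDerivAt (fun y => U (a * y)) (deriv U (a * x) * a) x := by
    simpa [Function.comp_def] using
      (hdAt _ (mul_pos ha hx)).hasDerivAt.comp x ((hasDerivAt_id x).const_mul a)
  have hrhs : HasDerivAt (fun y => U (a * y)) (b * deriv U x) x :=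
    (((hdAt x hx).hasDerivAt.const_mul b).add_const d).congr_of_eventuallyEq
      (Filter.eventually_of_mem (isOpen_Ioi.mem_nhds hx) hU)
  exact hlhs.unique hrhs

theorem exists_deriv_eq_mul_rpow_neg {U : ℝ → ℝ} (hmono : MonotoneOn U (Ioi 0))
    (hdiff : DifferentiableOn ℝ U (Ioi 0)) (hconc : StrictConcaveOn ℝ (Ioi 0) U)
    (hscale : ∀ a, 0 < a → ∃ b d : ℝ, ∀ x, 0 < x → U (a * x) = b * U x + d) :
    ∃ α : ℝ, 0 < α ∧ ∀ x, 0 < x → deriv U x = deriv U 1 * x ^ (-α) := by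
  have hdAt : ∀ x ∈ Ioi (0 : ℝ), DifferentiableAt ℝ U x := fun x hx =>
    hdiff.differentiableAt (isOpen_Ioi.mem_nhds hx)
  have hpos : ∀ x, 0 < x → 0 < deriv U x := fun x hx =>
    hconc.deriv_pos_of_monotoneOn hmono hx (hx.trans (lt_add_one x)) (lt_add_one x) (hdAt x hx)
  have hanti : StrictAntiOn (deriv U) (Ioi 0) := hconc.strictAntiOn_deriv hdAt
  have hmul : ∀ a x, 0 < a → 0 < x → deriv U (a * x) * deriv U 1 = deriv U a * deriv U x := by
    intro a x ha hx
    obtain ⟨b, d, hU⟩ := hscale a ha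
    have hx' := deriv_comp_mul_of_affine_scaling hdiff ha hU hx
    have h1 := deriv_comp_mul_of_affine_scaling hdiff ha hU one_pos
    rw [mul_one] at h1
    apply mul_right_cancel₀ ha.ne'
    linear_combination deriv U 1 * hx' - deriv U x * h1
  set w := deriv U 1
  have hw : 0 < w := hpos 1 one_pos
  obtain ⟨s, hs⟩ := exists_rpow_of_map_mul_of_antitoneOn (h := fun x => deriv U x / w)
    (fun x hx => div_pos (hpos x hx) hw)
    (fun a x ha hx => by field_simp; exact hmul a x ha hx)
    (fun x hx y hy hxy => div_le_div_of_nonneg_right (hanti.antitoneOn hx hy hxy) hw.le)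
  have hs_neg : s < 0 := by
    have h21 : deriv U 2 / w < 1 := by
      rw [div_lt_one hw]; exact hanti (mem_Ioi.2 one_pos) (mem_Ioi.2 two_pos) one_lt_two
    rw [hs 2 two_pos, rpow_lt_one_iff_of_pos two_pos, or_iff_left (by norm_num)] at h21
    exact h21.2
  refine ⟨-s, neg_pos.2 hs_neg, fun x hx => ?_⟩
  rw [neg_neg, ← hs x hx]
  field_simp

theorem exists_eq_mul_rpow_div_add_of_deriv_eq {U : ℝ → ℝ} {w α : ℝ} (hα : α ≠ 1)
    (hdiff : DifferentiableOn ℝ U (Ioi 0)) (hU' : ∀ x, 0 < x → deriv U x = w * x ^ (-α)) :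
    ∃ c, ∀ x, 0 < x → U x = w * x ^ (1 - α) / (1 - α) + c := by
  have hg : ∀ x, 0 < x → HasDerivAt (fun y => w * y ^ (1 - α) / (1 - α)) (w * x ^ (-α)) x := by
    intro x hx
    have h := ((hasDerivAt_rpow_const (p := 1 - α) (Or.inl hx.ne')).const_mul w).div_const (1 - α)
    rwa [sub_sub_cancel_left, mul_left_comm,
      mul_div_cancel_left₀ _ (sub_ne_zero.2 (Ne.symm hα))] at h
  obtain ⟨c, hc⟩ := isOpen_Ioi.exists_eq_add_of_deriv_eq isPreconnected_Ioi hdiff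
    (fun x hx => (hg x hx).differentiableAt.differentiableWithinAt)
    (fun x hx => by rw [hU' x hx, (hg x hx).deriv])
  exact ⟨c, fun x hx => hc hx⟩

theorem exists_eq_mul_log_add_of_deriv_eq {U : ℝ → ℝ} {w : ℝ}
    (hdiff : DifferentiableOn ℝ U (Ioi 0)) (hU' : ∀ x, 0 < x → deriv U x = w * x⁻¹) :
    ∃ c, ∀ x, 0 < x → U x = w * log x + c := by
  have hg : ∀ x, 0 < x → HasDerivAt (fun y => w * log y) (w * x⁻¹) x := fun x hx =>
    (hasDerivAt_log hx.ne').const_mul w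
  obtain ⟨c, hc⟩ := isOpen_Ioi.exists_eq_add_of_deriv_eq isPreconnected_Ioi hdiff
    (fun x hx => (hg x hx).differentiableAt.differentiableWithinAt)
    (fun x hx => by rw [hU' x hx, (hg x hx).deriv])
  exact ⟨c, fun x hx => hc hx⟩

/-- Arrow–Pratt characterization: a strictly increasing, differentiable,
strictly concave `U` on `(0,∞)` satisfying the affine scaling equation
`U(ax) = bₐ·U(x) + dₐ` (with `bₐ > 0`) for every `a > 0` must be iso-elastic:
`U(x) = w·x^{1-α}/(1-α) + c` for some `α > 0`, `α ≠ 1`, or `U(x) = w·log x + c` (`α = 1`). -/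
theorem stmt6 (U : ℝ → ℝ)
    (hmono : StrictMonoOn U (Set.Ioi 0))
    (hdiff : DifferentiableOn ℝ U (Set.Ioi 0))
    (hconc : StrictConcaveOn ℝ (Set.Ioi 0) U)
    (hscale : ∀ a : ℝ, 0 < a →
      ∃ b : ℝ, 0 < b ∧ ∃ d : ℝ, ∀ x : ℝ, 0 < x → U (a * x) = b * U x + d) :
    ∃ α w c : ℝ, 0 < α ∧ 0 < w ∧
      ((α ≠ 1 ∧ ∀ x : ℝ, 0 < x → U x = w * x ^ (1 - α) / (1 - α) + c) ∨
       (α = 1 ∧ ∀ x : ℝ, 0 < x → U x = w * Real.log x + c)) := by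
  obtain ⟨α, hα, hU'⟩ := exists_deriv_eq_mul_rpow_neg hmono.monotoneOn hdiff hconc
    fun a ha => (hscale a ha).imp fun _ ⟨_, hd⟩ => hd
  have hw : 0 < deriv U 1 :=
    hconc.deriv_pos_of_monotoneOn hmono.monotoneOn (mem_Ioi.2 one_pos) (mem_Ioi.2 two_pos)
      one_lt_two (hdiff.differentiableAt (isOpen_Ioi.mem_nhds (mem_Ioi.2 one_pos)))
  by_cases hα1 : α = 1
  · subst hα1
    obtain ⟨c, hc⟩ := exists_eq_mul_log_add_of_deriv_eq hdiff fun x hx => by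
      rw [hU' x hx, rpow_neg_one]
    exact ⟨1, _, c, one_pos, hw, Or.inr ⟨rfl, hc⟩⟩
  · obtain ⟨c, hc⟩ := exists_eq_mul_rpow_div_add_of_deriv_eq hα1 hdiff hU'
    exact ⟨α, _, c, hα, hw, Or.inl ⟨hα1, hc⟩⟩
end

section
/- For i=1,2, let α_i>0, w_i>0, c_i∈ℝ, and let U_i:(0,∞)→ℝ be given by U_i(x) = w_i x^{1-α_i}/(1-α_i) + c_i if α_i≠1 and U_i(x) = w_i log x + c_i if α_i=1. Suppose there exist functions b:(0,∞)→(0,∞) and d:(0,∞)→ℝ such that U_i(a x) = b(a)·U_i(x) + d(a) for i=1,2, all a>0 and all x>0. Then α_1 = α_2. -/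
/-!
Comparing the scaling law at `x = 2` and `x = 1` eliminates `d(a)` and shows that the
multiplicative factor is forced by the utility alone: `b(a) = a^(1-α)` (with `a⁰ = 1` in the
logarithmic case), because `U(2a) - U(a) = a^(1-α) (U 2 - U 1)` and `U 2 ≠ U 1`. Evaluating at
`a = 2` gives `2^(1-α₁) = 2^(1-α₂)`, hence `α₁ = α₂`.
-/

open Real Set

noncomputable def isoelasticUtility (α w c x : ℝ) : ℝ :=
  if α = 1 then w * log x + c else w * x ^ (1 - α) / (1 - α) + c

namespace isoelasticUtility

variable {α w c a x y : ℝ}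

lemma mul_sub_mul (ha : 0 < a) (hx : 0 < x) (hy : 0 < y) :
    isoelasticUtility α w c (a * x) - isoelasticUtility α w c (a * y) =
      a ^ (1 - α) * (isoelasticUtility α w c x - isoelasticUtility α w c y) := by
  unfold isoelasticUtility
  split_ifs with hα
  · rw [hα, sub_self, rpow_zero, log_mul ha.ne' hx.ne', log_mul ha.ne' hy.ne']
    ring
  · rw [mul_rpow ha.le hx.le, mul_rpow ha.le hy.le]
    ring

lemma injOn (hw : w ≠ 0) : InjOn (isoelasticUtility α w c) (Ioi 0) := by
  intro x hx y hy hxy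
  unfold isoelasticUtility at hxy
  split_ifs at hxy with hα
  · exact log_injOn_pos hx hy (mul_left_cancel₀ hw (add_right_cancel hxy))
  · have hα' : 1 - α ≠ 0 := sub_ne_zero.mpr (Ne.symm hα)
    have hpow : x ^ (1 - α) = y ^ (1 - α) :=
      mul_left_cancel₀ hw ((div_left_inj' hα').mp (add_right_cancel hxy))
    exact (rpow_left_inj (le_of_lt hx) (le_of_lt hy) hα').mp hpow

end isoelasticUtility

lemma scale_eq_rpow_of_isoelastic {α w c a b d : ℝ} {U : ℝ → ℝ} (hw : w ≠ 0) (ha : 0 < a)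
    (hU : ∀ x, 0 < x → U x = isoelasticUtility α w c x)
    (hscale : ∀ x, 0 < x → U (a * x) = b * U x + d) :
    b = a ^ (1 - α) := by
  have hdiff : U 2 - U 1 ≠ 0 := by
    rw [hU 2 two_pos, hU 1 one_pos, sub_ne_zero]
    intro h
    have h21 := isoelasticUtility.injOn hw (mem_Ioi.mpr two_pos) (mem_Ioi.mpr one_pos) h
    norm_num at h21
  have hlaw : U (a * 2) - U (a * 1) = b * (U 2 - U 1) := by
    rw [hscale 2 two_pos, hscale 1 one_pos]
    ring
  have hiso : U (a * 2) - U (a * 1) = a ^ (1 - α) * (U 2 - U 1) := by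
    rw [hU _ (by positivity), hU _ (by positivity), hU 2 two_pos, hU 1 one_pos]
    exact isoelasticUtility.mul_sub_mul ha two_pos one_pos
  exact mul_right_cancel₀ hdiff (hlaw.symm.trans hiso)

theorem stmt7_general (α₁ α₂ w₁ w₂ c₁ c₂ : ℝ)
    (hw₁ : 0 < w₁) (hw₂ : 0 < w₂)
    (U₁ U₂ : ℝ → ℝ)
    (hU₁ : ∀ x : ℝ, 0 < x →
      U₁ x = if α₁ = 1 then w₁ * Real.log x + c₁ else w₁ * x ^ (1 - α₁) / (1 - α₁) + c₁)
    (hU₂ : ∀ x : ℝ, 0 < x →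
      U₂ x = if α₂ = 1 then w₂ * Real.log x + c₂ else w₂ * x ^ (1 - α₂) / (1 - α₂) + c₂)
    (b d : ℝ → ℝ)
    (hscale : ∀ a : ℝ, 0 < a → ∀ x : ℝ, 0 < x →
      U₁ (a * x) = b a * U₁ x + d a ∧ U₂ (a * x) = b a * U₂ x + d a) :
    α₁ = α₂ := by
  have h₁ : b 2 = 2 ^ (1 - α₁) :=
    scale_eq_rpow_of_isoelastic hw₁.ne' two_pos hU₁ fun x hx => (hscale 2 two_pos x hx).1
  have h₂ : b 2 = 2 ^ (1 - α₂) :=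
    scale_eq_rpow_of_isoelastic hw₂.ne' two_pos hU₂ fun x hx => (hscale 2 two_pos x hx).2
  have hexp : 1 - α₁ = 1 - α₂ := (rpow_right_inj two_pos (by norm_num)).mp (h₁.symm.trans h₂)
  linarith

/-- two iso-elastic (weighted α-fair) utilities on `(0,∞)` satisfying a common
affine scaling law `Uᵢ(ax) = b(a)·Uᵢ(x) + d(a)` must have the same fairness parameter `α`. -/
theorem stmt7 (α₁ α₂ w₁ w₂ c₁ c₂ : ℝ)
    (hα₁ : 0 < α₁) (hα₂ : 0 < α₂) (hw₁ : 0 < w₁) (hw₂ : 0 < w₂)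
    (U₁ U₂ : ℝ → ℝ)
    (hU₁ : ∀ x : ℝ, 0 < x →
      U₁ x = if α₁ = 1 then w₁ * Real.log x + c₁ else w₁ * x ^ (1 - α₁) / (1 - α₁) + c₁)
    (hU₂ : ∀ x : ℝ, 0 < x →
      U₂ x = if α₂ = 1 then w₂ * Real.log x + c₂ else w₂ * x ^ (1 - α₂) / (1 - α₂) + c₂)
    (b d : ℝ → ℝ) (hb : ∀ a : ℝ, 0 < a → 0 < b a)
    (hscale : ∀ a : ℝ, 0 < a → ∀ x : ℝ, 0 < x →
      U₁ (a * x) = b a * U₁ x + d a ∧ U₂ (a * x) = b a * U₂ x + d a) :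
    α₁ = α₂ :=
  stmt7_general α₁ α₂ w₁ w₂ c₁ c₂ hw₁ hw₂ U₁ U₂ hU₁ hU₂ b d hscale
end

section
/- Let U be a network utility function and, for a subset C ⊆ (0,∞)^R with a unique maximizer, write Λ(y;C) for the maximizer of Λ ↦ U(y,Λ) over C. Then the following are equivalent: (i) for every such C, every y∈(0,∞)^R and every a>0, Λ(ay;C) = Λ(y;C); (ii) for every such C, every y∈(0,∞)^R and every a>0, Λ(y;aC) = a·Λ(y;C), where aC = {a·Λ : Λ∈C}. -/
/-- The network utility function built from per-route utilities `u r`. -/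
noncomputable def netUtil {R : Type*} [Fintype R] (u : R → ℝ → ℝ)
    (y Λ : R → ℝ) : ℝ :=
  (∑ i, y i)⁻¹ * ∑ r, y r * u r (Λ r / y r)

/-- `L` is the unique maximizer of `Λ ↦ U y Λ` over the capacity set `C`. -/
def IsUniqueMax {R : Type*} (U : (R → ℝ) → (R → ℝ) → ℝ)
    (y : R → ℝ) (C : Set (R → ℝ)) (L : R → ℝ) : Prop :=
  L ∈ C ∧ ∀ Λ ∈ C, Λ ≠ L → U y Λ < U y L

/-!
The network utility is homogeneous of degree zero in the pair `(y, Λ)`, so scaling by `a` carries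
the unique maximizer of `U(y, ·)` over `C` to that of `U(a y, ·)` over `a C`:
`Λ(a y; a C) = a Λ(y; C)`. Flow scalability applied to `a C` turns this into capacity scaling,
and capacity scaling applied at `a y` turns it into flow scalability.
-/

lemma IsUniqueMax.image {R : Type*} {U : (R → ℝ) → (R → ℝ) → ℝ} {y y' : R → ℝ}
    {C : Set (R → ℝ)} {L : R → ℝ} {f : (R → ℝ) → (R → ℝ)}
    (hU : ∀ Λ ∈ C, U y' (f Λ) = U y Λ) (h : IsUniqueMax U y C L) :
    IsUniqueMax U y' (f '' C) (f L) := by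
  refine ⟨Set.mem_image_of_mem f h.1, ?_⟩
  rintro _ ⟨Λ, hΛ, rfl⟩ hne
  rw [hU Λ hΛ, hU L h.1]
  exact h.2 Λ hΛ (fun hΛL => hne (congrArg f hΛL))

lemma mul_pi_injective {R : Type*} {a : ℝ} (ha : a ≠ 0) :
    Function.Injective (fun (Λ : R → ℝ) (r : R) => a * Λ r) :=
  smul_right_injective (R → ℝ) ha

lemma netUtil_mul_mul {R : Type*} [Fintype R] (u : R → ℝ → ℝ) {a : ℝ} (ha : a ≠ 0)
    (y Λ : R → ℝ) :
    netUtil u (fun r => a * y r) (fun r => a * Λ r) = netUtil u y Λ := by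
  simp only [netUtil, mul_div_mul_left _ _ ha, mul_assoc, ← Finset.mul_sum, mul_inv]
  field_simp

lemma isUniqueMax_netUtil_mul {R : Type*} [Fintype R] (u : R → ℝ → ℝ) {a : ℝ} (ha : a ≠ 0)
    {y : R → ℝ} {C : Set (R → ℝ)} {L : R → ℝ} (hL : IsUniqueMax (netUtil u) y C L) :
    IsUniqueMax (netUtil u) (fun r => a * y r)
      ((fun (Λ : R → ℝ) (r : R) => a * Λ r) '' C) (fun r => a * L r) :=
  hL.image fun Λ _ => netUtil_mul_mul u ha y Λ

theorem stmt17_general {R : Type*} [Fintype R]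
    (u : R → ℝ → ℝ) :
    (∀ C : Set (R → ℝ), (∀ Λ ∈ C, ∀ r, 0 < Λ r) →
      ∀ y : R → ℝ, (∀ r, 0 < y r) → ∀ a : ℝ, 0 < a → ∀ L L' : R → ℝ,
        IsUniqueMax (netUtil u) y C L →
        IsUniqueMax (netUtil u) (fun r => a * y r) C L' → L' = L)
    ↔
    (∀ C : Set (R → ℝ), (∀ Λ ∈ C, ∀ r, 0 < Λ r) →
      ∀ y : R → ℝ, (∀ r, 0 < y r) → ∀ a : ℝ, 0 < a → ∀ L L' : R → ℝ,
        IsUniqueMax (netUtil u) y C L →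
        IsUniqueMax (netUtil u) y ((fun Λ : R → ℝ => fun r => a * Λ r) '' C) L' →
        L' = fun r => a * L r) := by
  constructor
  · intro hflow C hC y hy a ha L L' hL hL'
    have haC : ∀ Λ ∈ (fun (Λ : R → ℝ) (r : R) => a * Λ r) '' C, ∀ r, 0 < Λ r := by
      rintro _ ⟨Λ, hΛ, rfl⟩ r
      exact mul_pos ha (hC Λ hΛ r)
    exact (hflow _ haC y hy a ha L' _ hL' (isUniqueMax_netUtil_mul u ha.ne' hL)).symm
  · intro hcap C hC y hy a ha L L' hL hL'
    have hay : ∀ r, 0 < a * y r := fun r => mul_pos ha (hy r)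
    exact mul_pi_injective ha.ne'
      (hcap C hC _ hay a ha L' _ hL' (isUniqueMax_netUtil_mul u ha.ne' hL)).symm

/-- for a network utility function, flow scalability (`Λ(ay;C) = Λ(y;C)`) is
equivalent to proportional scaling with capacity (`Λ(y;aC) = a·Λ(y;C)`), over all capacity
sets `C ⊆ (0,∞)^R` admitting a unique maximizer. -/
theorem stmt17 {R : Type*} [Fintype R] [Nonempty R]
    (u : R → ℝ → ℝ)
    (hmono : ∀ r, StrictMonoOn (u r) (Set.Ioi 0))
    (hdiff : ∀ r, DifferentiableOn ℝ (u r) (Set.Ioi 0))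
    (hconc : ∀ r, StrictConcaveOn ℝ (Set.Ioi 0) (u r)) :
    (∀ C : Set (R → ℝ), (∀ Λ ∈ C, ∀ r, 0 < Λ r) →
      ∀ y : R → ℝ, (∀ r, 0 < y r) → ∀ a : ℝ, 0 < a → ∀ L L' : R → ℝ,
        IsUniqueMax (netUtil u) y C L →
        IsUniqueMax (netUtil u) (fun r => a * y r) C L' → L' = L)
    ↔
    (∀ C : Set (R → ℝ), (∀ Λ ∈ C, ∀ r, 0 < Λ r) →
      ∀ y : R → ℝ, (∀ r, 0 < y r) → ∀ a : ℝ, 0 < a → ∀ L L' : R → ℝ,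
        IsUniqueMax (netUtil u) y C L →
        IsUniqueMax (netUtil u) y ((fun Λ : R → ℝ => fun r => a * Λ r) '' C) L' →
        L' = fun r => a * L r) :=
  stmt17_general u
end
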